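/- arXiv:2601.04220 — 2 statements merged into one kernel-verified Lean document; each statement's English description precedes it below -/
import Mathlib

section
/- For each $n \in \{1,\dots,N\}$ let $W_n(S) = V_{0n} + \sum_{i \in S} w_{in}$ with $V_{0n} > 0$ and $w_{in} \ge 0$, and let $\sigma_n \in (0,1]$. Then the set function $Z(S) = \log\left(\sum_{n=1}^N W_n(S)^{\sigma_n}\right)$ is monotonically increasing and submodular on subsets of $[m]$. -/
/-- Concavity-type inequality for `rpow`: for `0 ≤ a ≤ b`, `0 ≤ c`, `0 ≤ σ ≤ 1`,
`(b+c)^σ - b^σ ≤ (a+c)^σ - a^σ` (stated without subtraction). -/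
lemma rpow_concave_diff {a b c σ : ℝ} (ha : 0 ≤ a) (hab : a ≤ b) (hc : 0 ≤ c)
    (hσ0 : 0 ≤ σ) (hσ1 : σ ≤ 1) :
    (b + c) ^ σ + a ^ σ ≤ (a + c) ^ σ + b ^ σ := by
  rcases le_or_gt (b + c) a with h | h
  · have hba : b = a := le_antisymm (by linarith) hab
    have hc0 : c = 0 := le_antisymm (by linarith) hc
    subst hba; subst hc0; simp [add_comm]
  · have hD : 0 < b + c - a := by linarith
    set lam := (b - a) / (b + c - a) with hlam
    set mu := c / (b + c - a) with hmu
    have hlam0 : 0 ≤ lam := div_nonneg (by linarith) hD.le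
    have hmu0 : 0 ≤ mu := div_nonneg hc hD.le
    have hsum : lam + mu = 1 := by
      rw [hlam, hmu, ← add_div, div_eq_one_iff_eq hD.ne']
      ring
    have hbc : (0:ℝ) ≤ b + c := by linarith
    have hcon := Real.concaveOn_rpow hσ0 hσ1
    have h1 := hcon.2 (Set.mem_Ici.2 ha) (Set.mem_Ici.2 hbc) hlam0 hmu0 hsum
    have h2 := hcon.2 (Set.mem_Ici.2 ha) (Set.mem_Ici.2 hbc) hmu0 hlam0 (by linarith)
    have e1 : lam • a + mu • (b + c) = a + c := by
      simp only [smul_eq_mul, hlam, hmu]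
      field_simp
      ring
    have e2 : mu • a + lam • (b + c) = b := by
      simp only [smul_eq_mul, hlam, hmu]
      field_simp
      ring
    rw [e1] at h1
    rw [e2] at h2
    simp only [smul_eq_mul] at h1 h2
    have key : lam * a ^ σ + mu * (b + c) ^ σ + (mu * a ^ σ + lam * (b + c) ^ σ) =
        a ^ σ + (b + c) ^ σ := by linear_combination (a ^ σ + (b + c) ^ σ) * hsum
    linarith [h1, h2, key]

/-- Core submodularity step for the log-of-sum-of-powers function. -/
lemma core_step (N : ℕ) [Nonempty (Fin N)] (σ : Fin N → ℝ)
    (hσ : ∀ n, σ n ∈ Set.Ioc (0:ℝ) 1) (s t c : Fin N → ℝ)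
    (hs : ∀ n, 0 < s n) (hst : ∀ n, s n ≤ t n) (hc : ∀ n, 0 ≤ c n) :
    Real.log (∑ n, (t n + c n) ^ σ n) - Real.log (∑ n, (t n) ^ σ n) ≤
      Real.log (∑ n, (s n + c n) ^ σ n) - Real.log (∑ n, (s n) ^ σ n) := by
  have ht : ∀ n, 0 < t n := fun n => lt_of_lt_of_le (hs n) (hst n)
  have hX1 : 0 < ∑ n, (s n) ^ σ n :=
    Finset.sum_pos (fun n _ => Real.rpow_pos_of_pos (hs n) _) Finset.univ_nonempty
  have hX2 : 0 < ∑ n, (s n + c n) ^ σ n :=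
    Finset.sum_pos (fun n _ => Real.rpow_pos_of_pos (by linarith [hs n, hc n]) _)
      Finset.univ_nonempty
  have hY1 : 0 < ∑ n, (t n) ^ σ n :=
    Finset.sum_pos (fun n _ => Real.rpow_pos_of_pos (ht n) _) Finset.univ_nonempty
  have hY2 : 0 < ∑ n, (t n + c n) ^ σ n :=
    Finset.sum_pos (fun n _ => Real.rpow_pos_of_pos (by linarith [ht n, hc n]) _)
      Finset.univ_nonempty
  have hX1Y1 : (∑ n, (s n) ^ σ n) ≤ ∑ n, (t n) ^ σ n :=
    Finset.sum_le_sum fun n _ => Real.rpow_le_rpow (hs n).le (hst n) (hσ n).1.le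
  have hY1Y2 : (∑ n, (t n) ^ σ n) ≤ ∑ n, (t n + c n) ^ σ n :=
    Finset.sum_le_sum fun n _ =>
      Real.rpow_le_rpow (ht n).le (by linarith [hc n]) (hσ n).1.le
  have hdiff : (∑ n, (t n + c n) ^ σ n) + ∑ n, (s n) ^ σ n ≤
      (∑ n, (s n + c n) ^ σ n) + ∑ n, (t n) ^ σ n := by
    have h := Finset.sum_le_sum (f := fun n => (t n + c n) ^ σ n + (s n) ^ σ n)
      (g := fun n => (s n + c n) ^ σ n + (t n) ^ σ n)
      (fun n (_ : n ∈ Finset.univ) =>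
        rpow_concave_diff (hs n).le (hst n) (hc n) (hσ n).1.le (hσ n).2)
    simpa [Finset.sum_add_distrib] using h
  have hprod : (∑ n, (t n + c n) ^ σ n) * (∑ n, (s n) ^ σ n) ≤
      (∑ n, (t n) ^ σ n) * (∑ n, (s n + c n) ^ σ n) := by
    nlinarith [mul_nonneg (by linarith : (0:ℝ) ≤ (∑ n, (s n + c n) ^ σ n) +
        (∑ n, (t n) ^ σ n) - (∑ n, (t n + c n) ^ σ n) - (∑ n, (s n) ^ σ n)) hX1.le,
      mul_nonneg (by linarith : (0:ℝ) ≤ (∑ n, (s n + c n) ^ σ n) - (∑ n, (s n) ^ σ n))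
        (by linarith : (0:ℝ) ≤ (∑ n, (t n) ^ σ n) - (∑ n, (s n) ^ σ n))]
  have hlog := Real.log_le_log (by positivity) hprod
  rw [Real.log_mul hY2.ne' hX1.ne', Real.log_mul hY1.ne' hX2.ne'] at hlog
  linarith

theorem stmt4 (m N : ℕ) (hN : 1 ≤ N) (V0 : Fin N → ℝ) (hV0 : ∀ n, 0 < V0 n)
    (w : Fin m → Fin N → ℝ) (hw : ∀ i n, 0 ≤ w i n)
    (σ : Fin N → ℝ) (hσ : ∀ n, σ n ∈ Set.Ioc (0:ℝ) 1) :
    (∀ A B : Finset (Fin m), A ⊆ B →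
      Real.log (∑ n, (V0 n + ∑ i ∈ A, w i n) ^ σ n) ≤
      Real.log (∑ n, (V0 n + ∑ i ∈ B, w i n) ^ σ n)) ∧
    (∀ A B : Finset (Fin m), A ⊆ B → ∀ j ∉ B,
      Real.log (∑ n, (V0 n + ∑ i ∈ insert j B, w i n) ^ σ n) -
        Real.log (∑ n, (V0 n + ∑ i ∈ B, w i n) ^ σ n) ≤
      Real.log (∑ n, (V0 n + ∑ i ∈ insert j A, w i n) ^ σ n) -
        Real.log (∑ n, (V0 n + ∑ i ∈ A, w i n) ^ σ n)) := by
  haveI : Nonempty (Fin N) := ⟨⟨0, hN⟩⟩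
  have hbase : ∀ (S : Finset (Fin m)) n, 0 < V0 n + ∑ i ∈ S, w i n := fun S n =>
    add_pos_of_pos_of_nonneg (hV0 n) (Finset.sum_nonneg fun i _ => hw i n)
  have hmono : ∀ (S T : Finset (Fin m)), S ⊆ T →
      ∀ n, V0 n + ∑ i ∈ S, w i n ≤ V0 n + ∑ i ∈ T, w i n := fun S T hST n => by
    have := Finset.sum_le_sum_of_subset_of_nonneg hST (fun i _ _ => hw i n)
    linarith
  constructor
  · intro A B hAB
    apply Real.log_le_log
      (Finset.sum_pos (fun n _ => Real.rpow_pos_of_pos (hbase A n) _) Finset.univ_nonempty)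
    exact Finset.sum_le_sum fun n _ =>
      Real.rpow_le_rpow (hbase A n).le (hmono A B hAB n) (hσ n).1.le
  · intro A B hAB j hjB
    have hjA : j ∉ A := fun h => hjB (hAB h)
    have eB : (∑ n, (V0 n + ∑ i ∈ insert j B, w i n) ^ σ n) =
        ∑ n, ((V0 n + ∑ i ∈ B, w i n) + w j n) ^ σ n :=
      Finset.sum_congr rfl fun n _ => by rw [Finset.sum_insert hjB]; ring_nf
    have eA : (∑ n, (V0 n + ∑ i ∈ insert j A, w i n) ^ σ n) =
        ∑ n, ((V0 n + ∑ i ∈ A, w i n) + w j n) ^ σ n :=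
      Finset.sum_congr rfl fun n _ => by rw [Finset.sum_insert hjA]; ring_nf
    rw [eA, eB]
    exact core_step N σ hσ (fun n => V0 n + ∑ i ∈ A, w i n)
      (fun n => V0 n + ∑ i ∈ B, w i n) (fun n => w j n)
      (hbase A) (fun n => hmono A B hAB n) (fun n => hw j n)
end

section
/- Let $f(\mathbf{x}) = \log\left(\sum_{n=1}^N x_n^{\sigma_n}\right)$ for $\mathbf{x} \in (0,\infty)^N$ with $\sigma_n \in (0,1]$, and fix $\boldsymbol{\delta} \in [0,\infty)^N$. Then the marginal increment $\Delta(\mathbf{x}) = f(\mathbf{x} + \boldsymbol{\delta}) - f(\mathbf{x})$ is componentwise nonincreasing in $\mathbf{x}$: if $\mathbf{x} \le \mathbf{x}'$ coordinatewise (both in $(0,\infty)^N$), then $\Delta(\mathbf{x}) \ge \Delta(\mathbf{x}')$. -/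
lemma incr_anti {s d : ℝ} (hs : 0 < s) (hs1 : s ≤ 1) (hd : 0 ≤ d)
    {a b : ℝ} (ha : 0 < a) (hab : a ≤ b) :
    (b + d) ^ s - b ^ s ≤ (a + d) ^ s - a ^ s := by
  have key : ∀ t : ℝ, 0 < t → HasDerivAt (fun t => (t + d) ^ s - t ^ s)
      ((s * (t + d) ^ (s - 1)) * 1 - s * t ^ (s - 1)) t := by
    intro t ht
    exact ((Real.hasDerivAt_rpow_const (p := s) (Or.inl (by positivity))).comp t
      ((hasDerivAt_id t).add_const d)).sub (Real.hasDerivAt_rpow_const (Or.inl ht.ne'))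
  have anti : AntitoneOn (fun t => (t + d) ^ s - t ^ s) (Set.Ici a) := by
    apply antitoneOn_of_deriv_nonpos (convex_Ici a)
    · intro t ht
      exact ((key t (lt_of_lt_of_le ha ht)).differentiableAt).continuousAt.continuousWithinAt
    · intro t ht
      rw [interior_Ici] at ht
      exact ((key t (ha.trans ht)).differentiableAt).differentiableWithinAt
    · intro t ht
      rw [interior_Ici] at ht
      rw [(key t (ha.trans ht)).deriv]
      have h1 : (t + d) ^ (s - 1) ≤ t ^ (s - 1) :=
        Real.rpow_le_rpow_of_nonpos (ha.trans ht) (by linarith) (by linarith)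
      nlinarith
  exact anti Set.self_mem_Ici hab hab

lemma step_lemma (N : ℕ) (σ : Fin N → ℝ) (hσ : ∀ n, σ n ∈ Set.Ioc (0:ℝ) 1)
    (δ : Fin N → ℝ) (hδ : ∀ n, 0 ≤ δ n)
    (y : Fin N → ℝ) (hy : ∀ n, 0 < y n) (k : Fin N) (c : ℝ) (hc : y k ≤ c) :
    (∑ n, (Function.update y k c n + δ n) ^ σ n) * (∑ n, (y n) ^ σ n) ≤
    (∑ n, (y n + δ n) ^ σ n) * (∑ n, (Function.update y k c n) ^ σ n) := by
  have key : ∀ f : Fin N → ℝ, ∑ n, f n = f k + ∑ n ∈ Finset.univ.erase k, f n :=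
    fun f => (Finset.add_sum_erase _ f (Finset.mem_univ k)).symm
  rw [key fun n => (Function.update y k c n + δ n) ^ σ n,
      key fun n => (y n) ^ σ n, key fun n => (y n + δ n) ^ σ n,
      key fun n => (Function.update y k c n) ^ σ n]
  have e1 : ∑ n ∈ Finset.univ.erase k, (Function.update y k c n + δ n) ^ σ n
      = ∑ n ∈ Finset.univ.erase k, (y n + δ n) ^ σ n :=
    Finset.sum_congr rfl fun n hn => by rw [Function.update_of_ne (Finset.ne_of_mem_erase hn)]
  have e2 : ∑ n ∈ Finset.univ.erase k, (Function.update y k c n) ^ σ n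
      = ∑ n ∈ Finset.univ.erase k, (y n) ^ σ n :=
    Finset.sum_congr rfl fun n hn => by rw [Function.update_of_ne (Finset.ne_of_mem_erase hn)]
  rw [e1, e2]
  simp only [Function.update_self]
  set T := ∑ n ∈ Finset.univ.erase k, (y n) ^ σ n with hTdef
  set Td := ∑ n ∈ Finset.univ.erase k, (y n + δ n) ^ σ n with hTddef
  have hyk := hy k
  have hdk := hδ k
  have hσk := hσ k
  have hT : 0 ≤ T := Finset.sum_nonneg fun n _ => Real.rpow_nonneg (hy n).le _
  have hTTd : T ≤ Td := Finset.sum_le_sum fun n _ =>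
    Real.rpow_le_rpow (hy n).le (by linarith [hδ n]) (hσ n).1.le
  have hc0 : 0 < c := lt_of_lt_of_le hyk hc
  have hBB' : (y k) ^ σ k ≤ c ^ σ k := Real.rpow_le_rpow hyk.le hc hσk.1.le
  have f1 : (c + δ k) ^ σ k * (y k) ^ σ k ≤ (y k + δ k) ^ σ k * c ^ σ k := by
    rw [← Real.mul_rpow (by linarith) hyk.le, ← Real.mul_rpow (by linarith) hc0.le]
    refine Real.rpow_le_rpow (by positivity) ?_ hσk.1.le
    nlinarith [mul_le_mul_of_nonneg_left hc hdk]
  have f2 : (c + δ k) ^ σ k - c ^ σ k ≤ (y k + δ k) ^ σ k - (y k) ^ σ k :=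
    incr_anti hσk.1 hσk.2 hdk hyk hc
  nlinarith [mul_le_mul_of_nonneg_right f2 hT,
    mul_le_mul_of_nonneg_left hTTd (sub_nonneg.mpr hBB')]

theorem stmt6 (N : ℕ) (hN : 1 ≤ N) (σ : Fin N → ℝ) (hσ : ∀ n, σ n ∈ Set.Ioc (0:ℝ) 1)
    (δ : Fin N → ℝ) (hδ : ∀ n, 0 ≤ δ n)
    (x x' : Fin N → ℝ) (hx : ∀ n, 0 < x n) (hx' : ∀ n, 0 < x' n)
    (hle : ∀ n, x n ≤ x' n) :
    Real.log (∑ n, (x' n + δ n) ^ σ n) - Real.log (∑ n, (x' n) ^ σ n) ≤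
    Real.log (∑ n, (x n + δ n) ^ σ n) - Real.log (∑ n, (x n) ^ σ n) := by
  have hne : (Finset.univ : Finset (Fin N)).Nonempty := ⟨⟨0, hN⟩, Finset.mem_univ _⟩
  have Spos : ∀ f : Fin N → ℝ, (∀ n, 0 < f n) → 0 < ∑ n, (f n) ^ σ n := fun f hf =>
    Finset.sum_pos (fun n _ => Real.rpow_pos_of_pos (hf n) _) hne
  -- the product inequality, via induction over the set of switched coordinates
  have chain : ∀ s : Finset (Fin N),
      (∑ n, ((if n ∈ s then x' n else x n) + δ n) ^ σ n) * (∑ n, (x n) ^ σ n) ≤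
      (∑ n, (x n + δ n) ^ σ n) * (∑ n, (if n ∈ s then x' n else x n) ^ σ n) := by
    intro s
    induction s using Finset.induction_on with
    | empty => simp [mul_comm]
    | @insert k s hk ih =>
      set y : Fin N → ℝ := fun n => if n ∈ s then x' n else x n with hy
      have hypos : ∀ n, 0 < y n := fun n => by
        by_cases h : n ∈ s <;> simp [hy, h, hx n, hx' n]
      have hupd : ∀ n, (if n ∈ insert k s then x' n else x n) = Function.update y k (x' k) n := by
        intro n
        by_cases h : n = k
        · subst h; simp [Function.update_self, hy, hk]
        · simp [Function.update_of_ne h, hy, h]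
      have hyk : y k ≤ x' k := by simp [hy, hk]; exact hle k
      have hstep := step_lemma N σ hσ δ hδ y hypos k (x' k) hyk
      have hyn : ∀ n, (if n ∈ s then x' n else x n) = y n := fun n => rfl
      simp only [hyn] at ih
      simp only [hupd]
      have hupos : ∀ n, 0 < Function.update y k (x' k) n := fun n => by
        by_cases h : n = k
        · subst h; simp [Function.update_self]; exact hx' n
        · simp [Function.update_of_ne h]; exact hypos n
      have p1 : 0 < ∑ n, (y n) ^ σ n := Spos y hypos
      have p2 : 0 < ∑ n, (y n + δ n) ^ σ n := Spos _ fun n => by linarith [hypos n, hδ n]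
      have h := mul_le_mul hstep ih
        (mul_nonneg p2.le (Finset.sum_nonneg fun n _ => Real.rpow_nonneg (hx n).le _))
        (mul_nonneg p2.le (Finset.sum_nonneg fun n _ => Real.rpow_nonneg (hupos n).le _))
      have key : ((∑ n, (Function.update y k (x' k) n + δ n) ^ σ n) * (∑ n, (x n) ^ σ n)) *
            ((∑ n, (y n) ^ σ n) * (∑ n, (y n + δ n) ^ σ n)) ≤
          ((∑ n, (x n + δ n) ^ σ n) * (∑ n, (Function.update y k (x' k) n) ^ σ n)) *
            ((∑ n, (y n) ^ σ n) * (∑ n, (y n + δ n) ^ σ n)) := by nlinarith [h]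
      exact le_of_mul_le_mul_right key (by positivity)
  have hx'eq : (fun n => if n ∈ (Finset.univ : Finset (Fin N)) then x' n else x n) = x' := by
    funext n; simp
  have hprod := chain Finset.univ
  simp only [Finset.mem_univ, if_true] at hprod
  have p1 : 0 < ∑ n, (x' n + δ n) ^ σ n := Spos _ fun n => by linarith [hx' n, hδ n]
  have p2 : 0 < ∑ n, (x n) ^ σ n := Spos _ hx
  have p3 : 0 < ∑ n, (x n + δ n) ^ σ n := Spos _ fun n => by linarith [hx n, hδ n]
  have p4 : 0 < ∑ n, (x' n) ^ σ n := Spos _ hx'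
  have hlog := Real.log_le_log (by positivity) hprod
  rw [Real.log_mul p1.ne' p2.ne', Real.log_mul p3.ne' p4.ne'] at hlog
  linarith
end
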